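/- arXiv:1405.6952 — 4 statements merged into one kernel-verified Lean document; each statement's English description precedes it below -/
import Mathlib

section
/- Assume sin(π(sin θ_n − sin θ_i)/2) ≠ 0 for all pairs n ≠ i. Then for every M and every n, the (n,n) entry of H̄^H H̄ equals M, and as M → ∞ the matrix (1/M)·H̄^H H̄ converges entrywise to the N×N identity matrix. -/
open Filter Matrix

/-! The Gram entries of the steering matrix are geometric sums of the unimodular number
`exp(iπ(sin θ_n − sin θ_i))`, which differs from `1` exactly when the hypothesis on the half-angle
sine holds; such sums stay bounded, so they vanish after division by `M`. -/

/-- The `M×N` steering matrix with entries `[H̄]_{mn} = exp(−i(m−1)π sin θ_n)`, `m = 1,…,M`. -/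
noncomputable def steer {N : ℕ} (θ : Fin N → ℝ) (M : ℕ) : Matrix (Fin M) (Fin N) ℂ :=
  fun m n => Complex.exp (-Complex.I * ((m : ℕ) : ℂ) * (Real.pi : ℂ) * (Real.sin (θ n) : ℂ))

open Finset Topology

section GeomSum

variable {𝕜 : Type*} [RCLike 𝕜] {z : 𝕜}

theorem norm_geom_sum_le_of_norm_le_one (hz : ‖z‖ ≤ 1) (hz1 : z ≠ 1) (M : ℕ) :
    ‖∑ m ∈ range M, z ^ m‖ ≤ 2 / ‖z - 1‖ := by
  rw [geom_sum_eq hz1, norm_div]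
  gcongr
  calc ‖z ^ M - 1‖ ≤ ‖z‖ ^ M + ‖(1 : 𝕜)‖ := by rw [← norm_pow]; exact norm_sub_le _ _
    _ ≤ 2 := by rw [norm_one]; linarith [pow_le_one₀ (norm_nonneg z) hz (n := M)]

theorem tendsto_inv_mul_geom_sum_of_norm_le_one (hz : ‖z‖ ≤ 1) (hz1 : z ≠ 1) :
    Tendsto (fun M : ℕ => (M : 𝕜)⁻¹ * ∑ m ∈ range M, z ^ m) atTop (𝓝 0) :=
  tendsto_inv_atTop_nhds_zero_nat.zero_mul_isBoundedUnder_le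
    (isBoundedUnder_of ⟨2 / ‖z - 1‖, norm_geom_sum_le_of_norm_le_one hz hz1⟩)

end GeomSum

theorem Complex.exp_ofReal_mul_I_eq_one_iff (x : ℝ) :
    Complex.exp (x * Complex.I) = 1 ↔ Real.sin (x / 2) = 0 := by
  rw [Complex.exp_eq_one_iff, Real.sin_eq_zero_iff]
  refine exists_congr fun k => ⟨fun h => ?_, fun h => ?_⟩
  · have : (x : ℂ) = k * (2 * Real.pi) := mul_right_cancel₀ Complex.I_ne_zero (by rw [h]; ring)
    rw [show x = k * (2 * Real.pi) by exact_mod_cast this]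
    ring
  · rw [show x = k * (2 * Real.pi) by linarith]
    push_cast
    ring

theorem steer_gram_apply {N : ℕ} (θ : Fin N → ℝ) (M : ℕ) (n i : Fin N) :
    ((steer θ M)ᴴ * steer θ M) n i =
      ∑ m ∈ range M,
        Complex.exp (↑(Real.pi * (Real.sin (θ n) - Real.sin (θ i))) * Complex.I) ^ m := by
  rw [Matrix.mul_apply, ← Fin.sum_univ_eq_sum_range]
  refine Fintype.sum_congr _ _ fun m => ?_
  rw [conjTranspose_apply, Complex.star_def, ← Complex.exp_nat_mul]
  simp only [steer, ← Complex.exp_conj, ← Complex.exp_add]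
  congr 1
  simp only [_root_.map_mul, map_neg, Complex.conj_I, Complex.conj_ofReal, map_natCast]
  push_cast
  ring

theorem steer_gram_apply_self {N : ℕ} (θ : Fin N → ℝ) (M : ℕ) (n : Fin N) :
    ((steer θ M)ᴴ * steer θ M) n n = M := by
  simp [steer_gram_apply]

theorem steering_gram_identity_limit_general
    (N : ℕ) (θ : Fin N → ℝ)
    (hθ : ∀ n i : Fin N, n ≠ i →
      Real.sin (Real.pi * (Real.sin (θ n) - Real.sin (θ i)) / 2) ≠ 0) :
    (∀ (M : ℕ) (n : Fin N), ((steer θ M)ᴴ * steer θ M) n n = (M : ℂ)) ∧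
    (∀ n i : Fin N,
      Filter.Tendsto (fun M : ℕ => ((M : ℂ))⁻¹ * (((steer θ M)ᴴ * steer θ M) n i))
        Filter.atTop (nhds ((1 : Matrix (Fin N) (Fin N) ℂ) n i))) := by
  refine ⟨steer_gram_apply_self θ, fun n i => ?_⟩
  rcases eq_or_ne n i with rfl | hni
  · rw [one_apply_eq]
    refine tendsto_const_nhds.congr' ?_
    filter_upwards [eventually_ne_atTop 0] with M hM
    rw [steer_gram_apply_self, inv_mul_cancel₀ (Nat.cast_ne_zero.mpr hM)]
  · rw [one_apply_ne hni]
    simp only [steer_gram_apply]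
    exact tendsto_inv_mul_geom_sum_of_norm_le_one (Complex.norm_exp_ofReal_mul_I _).le
      (mt (Complex.exp_ofReal_mul_I_eq_one_iff _).mp (hθ n i hni))

/-- If `sin(π(sin θ_n − sin θ_i)/2) ≠ 0` for all `n ≠ i`, then every diagonal
entry of `H̄ᴴH̄` equals `M`, and `(1/M)·H̄ᴴH̄` converges entrywise to the identity as `M → ∞`. -/
theorem steering_gram_identity_limit
    (N : ℕ) (hN : 1 ≤ N) (θ : Fin N → ℝ)
    (hθ : ∀ n i : Fin N, n ≠ i →
      Real.sin (Real.pi * (Real.sin (θ n) - Real.sin (θ i)) / 2) ≠ 0) :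
    (∀ (M : ℕ) (n : Fin N), ((steer θ M)ᴴ * steer θ M) n n = (M : ℂ)) ∧
    (∀ n i : Fin N,
      Filter.Tendsto (fun M : ℕ => ((M : ℂ))⁻¹ * (((steer θ M)ᴴ * steer θ M) n i))
        Filter.atTop (nhds ((1 : Matrix (Fin N) (Fin N) ℂ) n i))) :=
  steering_gram_identity_limit_general N θ hθ
end

section
/- Let X and Y be nonnegative random variables on a probability space with Y > 0 almost surely, E[Y] > 0, and such that X, Y, 1/Y, 1/(X+Y), log Y and log(X+Y) are all integrable. Then both of the quantities E[log₂(1 + X/Y)] and log₂(1 + E[X]/E[Y]) lie in the closed interval [ log₂(1/E[1/(X+Y)]) − log₂(E[Y]) , log₂(E[X+Y]) − log₂(1/E[1/Y]) ]. -/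
open MeasureTheory Filter

/-!
Put `Z = X + Y`, so that `log₂(1 + X/Y) = log₂ Z - log₂ Y` and `1 + E[X]/E[Y] = E[Z]/E[Y]`.
For a positive random variable `W`, Jensen's inequality for the concave `log`, applied to `W` and
to `1/W`, places `E[log W]` between the logarithms of the harmonic and the arithmetic means of `W`.
Subtracting these bounds for `Y` from those for `Z` gives the first claim; the second follows
because `log E[Z]` and `log E[Y]` themselves lie in the same two ranges.
-/

section PositiveRandomVariable

variable {Ω : Type*} [MeasurableSpace Ω] {μ : Measure Ω} {W : Ω → ℝ}

theorem integral_pos_of_ae_pos [NeZero μ] (hW : ∀ᵐ ω ∂μ, 0 < W ω) (hint : Integrable W μ) :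
    0 < ∫ ω, W ω ∂μ := by
  have hW0 : 0 ≤ᵐ[μ] W := hW.mono fun _ h => h.le
  refine (integral_nonneg_of_ae hW0).lt_of_ne fun h => NeZero.ne μ ?_
  have hzero : W =ᵐ[μ] 0 := (integral_eq_zero_iff_of_nonneg_ae hW0 hint).1 h.symm
  have hfalse : ∀ᵐ _ ∂μ, False := by
    filter_upwards [hW, hzero] with ω hpos hzero
    exact hpos.ne' hzero
  exact ae_eq_bot.1 (eventually_false_iff_eq_bot.1 hfalse)

variable [IsProbabilityMeasure μ]

theorem integral_log_le_log_integral (hW : ∀ᵐ ω ∂μ, 0 < W ω) (hint : Integrable W μ)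
    (hlog : Integrable (fun ω => Real.log (W ω)) μ) :
    ∫ ω, Real.log (W ω) ∂μ ≤ Real.log (∫ ω, W ω ∂μ) := by
  set c := ∫ ω, W ω ∂μ with hc
  have hcpos : 0 < c := integral_pos_of_ae_pos hW hint
  -- `log` lies below its tangent line at `c`; the tangent line integrates to `log c`.
  have htangent : ∀ᵐ ω ∂μ, Real.log (W ω) ≤ Real.log c + (W ω - c) / c := by
    filter_upwards [hW] with ω hω
    have h := Real.log_le_sub_one_of_pos (div_pos hω hcpos)
    rw [Real.log_div hω.ne' hcpos.ne', div_sub_one hcpos.ne'] at h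
    linarith
  have hlin : Integrable (fun ω => (W ω - c) / c) μ :=
    (hint.sub (integrable_const c)).div_const c
  calc ∫ ω, Real.log (W ω) ∂μ ≤ ∫ ω, (Real.log c + (W ω - c) / c) ∂μ :=
        integral_mono_ae hlog ((integrable_const _).add hlin) htangent
    _ = Real.log c := by
        rw [integral_add (integrable_const _) hlin, integral_div,
          integral_sub hint (integrable_const _)]
        simp [← hc]

theorem neg_log_integral_inv_le_integral_log (hW : ∀ᵐ ω ∂μ, 0 < W ω)
    (hinv : Integrable (fun ω => (W ω)⁻¹) μ) (hlog : Integrable (fun ω => Real.log (W ω)) μ) :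
    -Real.log (∫ ω, (W ω)⁻¹ ∂μ) ≤ ∫ ω, Real.log (W ω) ∂μ := by
  have h := integral_log_le_log_integral (hW.mono fun _ h => inv_pos.2 h) hinv
    (by simp only [Real.log_inv]; exact hlog.neg)
  simp only [Real.log_inv, integral_neg] at h
  linarith

theorem integral_logb_mem_Icc {b : ℝ} (hb : 1 < b) (hW : ∀ᵐ ω ∂μ, 0 < W ω)
    (hint : Integrable W μ) (hinv : Integrable (fun ω => (W ω)⁻¹) μ)
    (hlog : Integrable (fun ω => Real.log (W ω)) μ) :
    ∫ ω, Real.logb b (W ω) ∂μ ∈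
      Set.Icc (Real.logb b (1 / ∫ ω, (W ω)⁻¹ ∂μ)) (Real.logb b (∫ ω, W ω ∂μ)) := by
  have hlogb : 0 < Real.log b := Real.log_pos hb
  simp only [Real.logb, integral_div, one_div, Real.log_inv, Set.mem_Icc]
  exact ⟨div_le_div_of_nonneg_right (neg_log_integral_inv_le_integral_log hW hinv hlog) hlogb.le,
    div_le_div_of_nonneg_right (integral_log_le_log_integral hW hint hlog) hlogb.le⟩

end PositiveRandomVariable

theorem log_ratio_expectation_bounds_general
    {Ω : Type*} [MeasurableSpace Ω] (μ : Measure Ω) [IsProbabilityMeasure μ]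
    (X Y : Ω → ℝ)
    (hX0 : ∀ᵐ ω ∂μ, 0 ≤ X ω) (hY0 : ∀ᵐ ω ∂μ, 0 < Y ω)
    (hXint : Integrable X μ) (hYint : Integrable Y μ)
    (hinvY : Integrable (fun ω => (Y ω)⁻¹) μ)
    (hinvXY : Integrable (fun ω => (X ω + Y ω)⁻¹) μ)
    (hlogY : Integrable (fun ω => Real.log (Y ω)) μ)
    (hlogXY : Integrable (fun ω => Real.log (X ω + Y ω)) μ) :
    (∫ ω, Real.logb 2 (1 + X ω / Y ω) ∂μ) ∈
      Set.Icc
        (Real.logb 2 (1 / ∫ ω, (X ω + Y ω)⁻¹ ∂μ) - Real.logb 2 (∫ ω, Y ω ∂μ))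
        (Real.logb 2 (∫ ω, (X ω + Y ω) ∂μ) - Real.logb 2 (1 / ∫ ω, (Y ω)⁻¹ ∂μ)) ∧
    Real.logb 2 (1 + (∫ ω, X ω ∂μ) / (∫ ω, Y ω ∂μ)) ∈
      Set.Icc
        (Real.logb 2 (1 / ∫ ω, (X ω + Y ω)⁻¹ ∂μ) - Real.logb 2 (∫ ω, Y ω ∂μ))
        (Real.logb 2 (∫ ω, (X ω + Y ω) ∂μ) - Real.logb 2 (1 / ∫ ω, (Y ω)⁻¹ ∂μ)) := by
  have hZ0 : ∀ᵐ ω ∂μ, 0 < X ω + Y ω := by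
    filter_upwards [hX0, hY0] with ω hX hY
    positivity
  have hZint : Integrable (fun ω => X ω + Y ω) μ := hXint.add hYint
  obtain ⟨hZlow, hZup⟩ := integral_logb_mem_Icc one_lt_two hZ0 hZint hinvXY hlogXY
  obtain ⟨hYlow, hYup⟩ := integral_logb_mem_Icc one_lt_two hY0 hYint hinvY hlogY
  have hEY := integral_pos_of_ae_pos hY0 hYint
  have hEZ := integral_pos_of_ae_pos hZ0 hZint
  have hratio : ∫ ω, Real.logb 2 (1 + X ω / Y ω) ∂μ =
      ∫ ω, Real.logb 2 (X ω + Y ω) ∂μ - ∫ ω, Real.logb 2 (Y ω) ∂μ := by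
    have hlogbZ : Integrable (fun ω => Real.logb 2 (X ω + Y ω)) μ := hlogXY.div_const _
    have hlogbY : Integrable (fun ω => Real.logb 2 (Y ω)) μ := hlogY.div_const _
    rw [← integral_sub hlogbZ hlogbY]
    refine integral_congr_ae ?_
    filter_upwards [hZ0, hY0] with ω hZ hY
    rw [← Real.logb_div hZ.ne' hY.ne', add_div, div_self hY.ne', add_comm]
  have hmean : Real.logb 2 (1 + (∫ ω, X ω ∂μ) / (∫ ω, Y ω ∂μ)) =
      Real.logb 2 (∫ ω, (X ω + Y ω) ∂μ) - Real.logb 2 (∫ ω, Y ω ∂μ) := by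
    rw [← Real.logb_div hEZ.ne' hEY.ne', integral_add hXint hYint, add_div, div_self hEY.ne',
      add_comm]
  rw [hratio, hmean]
  exact ⟨⟨by linarith, by linarith⟩, ⟨by linarith, by linarith⟩⟩

/-- (Paper's Lemma 1.) For nonnegative integrable random variables `X, Y`
with `Y > 0` a.s., `E[Y] > 0`, and with `1/Y`, `1/(X+Y)`, `log Y`, `log (X+Y)` integrable,
both `E[log₂(1 + X/Y)]` and `log₂(1 + E[X]/E[Y])` lie in the interval
`[log₂(1/E[1/(X+Y)]) − log₂(E[Y]), log₂(E[X+Y]) − log₂(1/E[1/Y])]`. -/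
theorem log_ratio_expectation_bounds
    {Ω : Type*} [MeasurableSpace Ω] (μ : Measure Ω) [IsProbabilityMeasure μ]
    (X Y : Ω → ℝ)
    (hX0 : ∀ᵐ ω ∂μ, 0 ≤ X ω) (hY0 : ∀ᵐ ω ∂μ, 0 < Y ω)
    (hEY : 0 < ∫ ω, Y ω ∂μ)
    (hXint : Integrable X μ) (hYint : Integrable Y μ)
    (hinvY : Integrable (fun ω => (Y ω)⁻¹) μ)
    (hinvXY : Integrable (fun ω => (X ω + Y ω)⁻¹) μ)
    (hlogY : Integrable (fun ω => Real.log (Y ω)) μ)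
    (hlogXY : Integrable (fun ω => Real.log (X ω + Y ω)) μ) :
    (∫ ω, Real.logb 2 (1 + X ω / Y ω) ∂μ) ∈
      Set.Icc
        (Real.logb 2 (1 / ∫ ω, (X ω + Y ω)⁻¹ ∂μ) - Real.logb 2 (∫ ω, Y ω ∂μ))
        (Real.logb 2 (∫ ω, (X ω + Y ω) ∂μ) - Real.logb 2 (1 / ∫ ω, (Y ω)⁻¹ ∂μ)) ∧
    Real.logb 2 (1 + (∫ ω, X ω ∂μ) / (∫ ω, Y ω ∂μ)) ∈
      Set.Icc
        (Real.logb 2 (1 / ∫ ω, (X ω + Y ω)⁻¹ ∂μ) - Real.logb 2 (∫ ω, Y ω ∂μ))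
        (Real.logb 2 (∫ ω, (X ω + Y ω) ∂μ) - Real.logb 2 (1 / ∫ ω, (Y ω)⁻¹ ∂μ)) :=
  log_ratio_expectation_bounds_general μ X Y hX0 hY0 hXint hYint hinvY hinvXY hlogY hlogXY
end

section
/- Fix M ≥ 1, p_u > 0, β_1,…,β_N > 0, an index n, and real numbers φ_{ni} for i ≠ n. For K ≥ 0 define the MRC rate approximation with common Ricean factor K: R̃(K) = log₂( 1 + p_u·β_n·(2MK + M + M²(K+1)²) / ( p_u·Σ_{i≠n} β_i·(K²·φ_{ni}² + 2MK + M) + M·(K+1)² ) ). Then as K → ∞, R̃(K) → log₂( 1 + p_u·β_n·M² / ( p_u·Σ_{i≠n} β_i·φ_{ni}² + M ) ). -/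
open Filter Finset Real Topology

/-! Numerator and denominator are quadratics in `K`, so their ratio tends to the ratio of the
leading coefficients; that limit is positive, where `logb 2` is continuous. -/

theorem tendsto_quadratic_div_quadratic_atTop (a b c d e f : ℝ) (hd : d ≠ 0) :
    Tendsto (fun x => (a * x ^ 2 + b * x + c) / (d * x ^ 2 + e * x + f)) atTop (𝓝 (a / d)) := by
  have hzero : Tendsto (fun y : ℝ => (a + b * y + c * y ^ 2) / (d + e * y + f * y ^ 2))
      (𝓝 0) (𝓝 (a / d)) := by
    have hnum : Tendsto (fun y : ℝ => a + b * y + c * y ^ 2) (𝓝 0) (𝓝 a) := by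
      simpa using ((by fun_prop : Continuous fun y : ℝ => a + b * y + c * y ^ 2).tendsto 0)
    have hden : Tendsto (fun y : ℝ => d + e * y + f * y ^ 2) (𝓝 0) (𝓝 d) := by
      simpa using ((by fun_prop : Continuous fun y : ℝ => d + e * y + f * y ^ 2).tendsto 0)
    exact hnum.div hden hd
  refine (hzero.comp tendsto_inv_atTop_zero).congr' ?_
  filter_upwards [eventually_gt_atTop 0] with x hx
  have hx2 : x ^ 2 ≠ 0 := by positivity
  rw [Function.comp_apply, ← mul_div_mul_left _ _ hx2]
  congr 1 <;> field_simp

/-- Limit, as the common Ricean factor `K → ∞`, of the closed-form MRC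
rate approximation with perfect CSI. -/
theorem mrc_rate_approx_limit_K
    (N M : ℕ) (hM : 1 ≤ M) (pu : ℝ) (hpu : 0 < pu)
    (β : Fin N → ℝ) (hβ : ∀ i, 0 < β i) (n : Fin N) (φ : Fin N → ℝ) :
    Filter.Tendsto (fun K : ℝ =>
        Real.logb 2 (1 + pu * β n * (2 * M * K + M + (M : ℝ) ^ 2 * (K + 1) ^ 2) /
          (pu * ∑ i ∈ Finset.univ.erase n, β i * (K ^ 2 * φ i ^ 2 + 2 * M * K + M)
            + M * (K + 1) ^ 2)))
      Filter.atTop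
      (nhds (Real.logb 2 (1 + pu * β n * (M : ℝ) ^ 2 /
          (pu * ∑ i ∈ Finset.univ.erase n, β i * φ i ^ 2 + M)))) := by
  set S := ∑ i ∈ Finset.univ.erase n, β i * φ i ^ 2
  set B := ∑ i ∈ Finset.univ.erase n, β i
  have hsum (K : ℝ) : ∑ i ∈ Finset.univ.erase n, β i * (K ^ 2 * φ i ^ 2 + 2 * M * K + M)
      = K ^ 2 * S + (2 * M * K + M) * B := by
    rw [Finset.mul_sum, Finset.mul_sum, ← Finset.sum_add_distrib]
    exact Finset.sum_congr rfl fun i _ => by ring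
  have hM0 : (0 : ℝ) < M := by exact_mod_cast hM
  have hS : 0 ≤ S := Finset.sum_nonneg fun i _ => mul_nonneg (hβ i).le (sq_nonneg _)
  have hlead : 0 < pu * S + M := by positivity
  have hratio := tendsto_quadratic_div_quadratic_atTop (pu * β n * M ^ 2)
    (2 * pu * β n * M * (M + 1)) (pu * β n * M * (M + 1)) (pu * S + M)
    (2 * M * (pu * B + 1)) (M * (pu * B + 1)) hlead.ne'
  have hlim_pos : 0 < 1 + pu * β n * (M : ℝ) ^ 2 / (pu * S + M) := by
    have := hβ n; positivity
  refine ((continuousAt_logb hlim_pos.ne').tendsto.comp (hratio.const_add 1)).congr fun K => ?_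
  simp only [Function.comp_apply, hsum]
  congr 3 <;> ring
end

section
/- Fix N ≥ 1, arrival angles θ_1,…,θ_N ∈ ℝ with sin(π(sin θ_n − sin θ_i)/2) ≠ 0 for all pairs n ≠ i, Ricean K-factors K_1,…,K_N ≥ 0, coefficients β_1,…,β_N > 0, an index n, and E_u > 0. For each M set p_u = E_u/M, φ_{ni}(M) = sin(Mπ(sin θ_n − sin θ_i)/2)/sin(π(sin θ_n − sin θ_i)/2), Δ_1(M,i) = [K_nK_iφ_{ni}(M)² + M(K_n+K_i) + M]/(K_i+1), and R̃(M) = log₂( 1 + p_u·β_n·(2MK_n + M + M²(K_n+1)²) / ( p_u·(K_n+1)·Σ_{i≠n} β_i·Δ_1(M,i) + M·(K_n+1)² ) ). Then R̃(M) → log₂(1 + E_u·β_n) as M → ∞. -/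
open Filter Finset Real

/-- The array factor `φ_{ni}(M)`. -/
noncomputable def phiFactor {N : ℕ} (θ : Fin N → ℝ) (M : ℕ) (n i : Fin N) : ℝ :=
  Real.sin (M * Real.pi * (Real.sin (θ n) - Real.sin (θ i)) / 2) /
    Real.sin (Real.pi * (Real.sin (θ n) - Real.sin (θ i)) / 2)

/-- `Δ₁(M,i)`. -/
noncomputable def Delta1 {N : ℕ} (θ : Fin N → ℝ) (K : Fin N → ℝ) (M : ℕ) (n i : Fin N) : ℝ :=
  (K n * K i * (phiFactor θ M n i) ^ 2 + M * (K n + K i) + M) / (K i + 1)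

/-- With power scaling `p_u = E_u / M`, the closed-form MRC rate
approximation with perfect CSI converges to `log₂(1 + E_u β_n)` as `M → ∞`. -/
theorem mrc_rate_approx_power_scaling
    (N : ℕ) (hN : 1 ≤ N) (θ : Fin N → ℝ)
    (hθ : ∀ n i : Fin N, n ≠ i →
      Real.sin (Real.pi * (Real.sin (θ n) - Real.sin (θ i)) / 2) ≠ 0)
    (K : Fin N → ℝ) (hK : ∀ i, 0 ≤ K i)
    (β : Fin N → ℝ) (hβ : ∀ i, 0 < β i) (n : Fin N) (Eu : ℝ) (hEu : 0 < Eu) :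
    Filter.Tendsto (fun M : ℕ =>
        Real.logb 2 (1 + (Eu / M) * β n * (2 * M * K n + M + (M : ℝ) ^ 2 * (K n + 1) ^ 2) /
          ((Eu / M) * (K n + 1) * (∑ i ∈ Finset.univ.erase n, β i * Delta1 θ K M n i)
            + M * (K n + 1) ^ 2)))
      Filter.atTop (nhds (Real.logb 2 (1 + Eu * β n))) := by
  set a : ℝ := K n + 1 with ha_def
  have ha1 : (1:ℝ) ≤ a := by have := hK n; simp [ha_def]; linarith
  have ha0 : (0:ℝ) < a := lt_of_lt_of_le one_pos ha1
  set S : Finset (Fin N) := Finset.univ.erase n with hS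
  -- bounded part and linear part of the interference sum
  set B : ℕ → ℝ := fun M => ∑ i ∈ S, β i * (K n * K i * (phiFactor θ M n i) ^ 2) / (K i + 1)
    with hB
  set D : ℝ := ∑ i ∈ S, β i * (K n + K i + 1) / (K i + 1) with hD
  have hKi1 : ∀ i : Fin N, (0:ℝ) < K i + 1 := fun i => by have := hK i; linarith
  have hsum : ∀ M : ℕ, (∑ i ∈ S, β i * Delta1 θ K M n i) = B M + (M : ℝ) * D := by
    intro M
    rw [hB, hD, Finset.mul_sum, ← Finset.sum_add_distrib]
    refine Finset.sum_congr rfl fun i _ => ?_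
    have h1 : (K i + 1) ≠ 0 := (hKi1 i).ne'
    rw [Delta1]
    field_simp
    ring
  have hBnonneg : ∀ M, 0 ≤ B M := by
    intro M
    refine Finset.sum_nonneg fun i _ => ?_
    exact div_nonneg (mul_nonneg (hβ i).le (mul_nonneg (mul_nonneg (hK n) (hK i))
      (sq_nonneg _))) (hKi1 i).le
  have hDnonneg : 0 ≤ D := by
    refine Finset.sum_nonneg fun i _ => ?_
    have h3 := hK i
    have h4 := hK n
    exact div_nonneg (mul_nonneg (hβ i).le (by linarith)) (hKi1 i).le
  -- uniform bound on B
  set C : ℝ := ∑ i ∈ S, β i * (K n * K i *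
      ((Real.sin (Real.pi * (Real.sin (θ n) - Real.sin (θ i)) / 2))⁻¹) ^ 2) / (K i + 1)
    with hC
  have hBle : ∀ M, B M ≤ C := by
    intro M
    refine Finset.sum_le_sum fun i hi => ?_
    have hne : n ≠ i := by
      rw [hS] at hi
      exact (Finset.ne_of_mem_erase hi).symm
    have hs := hθ n i hne
    have hφ : (phiFactor θ M n i) ^ 2 ≤
        ((Real.sin (Real.pi * (Real.sin (θ n) - Real.sin (θ i)) / 2))⁻¹) ^ 2 := by
      rw [phiFactor, div_pow, inv_pow, inv_eq_one_div]
      have hd : (0:ℝ) ≤ (Real.sin (Real.pi * (Real.sin (θ n) - Real.sin (θ i)) / 2)) ^ 2 :=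
        sq_nonneg _
      exact div_le_div_of_nonneg_right (Real.sin_sq_le_one _) hd
    have h1 := hKi1 i
    exact div_le_div_of_nonneg_right (mul_le_mul_of_nonneg_left
      (mul_le_mul_of_nonneg_left hφ (mul_nonneg (hK n) (hK i))) (hβ i).le) h1.le
  -- the simplified expression
  set num : ℕ → ℝ := fun M => (2 * K n + 1) / M + a ^ 2 with hnum
  set den : ℕ → ℝ := fun M => Eu * a * (B M / (M : ℝ) ^ 2) + Eu * a * (D / M) + a ^ 2
    with hden
  have hdenpos : ∀ M : ℕ, 0 < den M := by
    intro M
    have h1 : 0 ≤ B M / (M : ℝ) ^ 2 := div_nonneg (hBnonneg M) (by positivity)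
    have h2 : 0 ≤ D / (M : ℝ) := div_nonneg hDnonneg (Nat.cast_nonneg M)
    have : (0:ℝ) < a ^ 2 := by positivity
    rw [hden]
    nlinarith [hEu.le, ha0.le, mul_nonneg (mul_nonneg hEu.le ha0.le) h1,
      mul_nonneg (mul_nonneg hEu.le ha0.le) h2]
  -- tendsto of the simplified expression
  have hMtop : Tendsto (fun M : ℕ => (M : ℝ)) atTop atTop := tendsto_natCast_atTop_atTop
  have hM2top : Tendsto (fun M : ℕ => (M : ℝ) ^ 2) atTop atTop :=
    (tendsto_pow_atTop two_ne_zero).comp hMtop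
  have hBlim : Tendsto (fun M : ℕ => B M / (M : ℝ) ^ 2) atTop (nhds 0) := by
    have hub : Tendsto (fun M : ℕ => C / (M : ℝ) ^ 2) atTop (nhds 0) :=
      tendsto_const_nhds.div_atTop hM2top
    refine squeeze_zero (fun M => div_nonneg (hBnonneg M) (by positivity)) (fun M => ?_) hub
    exact div_le_div_of_nonneg_right (hBle M) (by positivity)
  have hDlim : Tendsto (fun M : ℕ => D / (M : ℝ)) atTop (nhds 0) :=
    tendsto_const_nhds.div_atTop hMtop
  have hnumlim : Tendsto num atTop (nhds (a ^ 2)) := by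
    have h1 : Tendsto (fun M : ℕ => (2 * K n + 1) / (M : ℝ)) atTop (nhds 0) :=
      tendsto_const_nhds.div_atTop hMtop
    have := h1.add (tendsto_const_nhds (x := a ^ 2))
    simpa using this
  have hdenlim : Tendsto den atTop (nhds (a ^ 2)) := by
    have h1 := (hBlim.const_mul (Eu * a)).add (hDlim.const_mul (Eu * a))
    have h2 := h1.add (tendsto_const_nhds (x := a ^ 2) (f := atTop))
    simpa [hden] using h2
  have hfrac : Tendsto (fun M : ℕ => Eu * β n * num M / den M) atTop
      (nhds (Eu * β n)) := by
    have ha2 : (a:ℝ) ^ 2 ≠ 0 := by positivity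
    have h1 : Tendsto (fun M : ℕ => Eu * β n * num M / den M) atTop
        (nhds (Eu * β n * a ^ 2 / a ^ 2)) :=
      ((hnumlim.const_mul (Eu * β n)).div hdenlim ha2)
    rwa [mul_div_assoc, div_self ha2, mul_one] at h1
  -- identify the original expression with the simplified one eventually
  have heq : ∀ᶠ M : ℕ in atTop,
      1 + (Eu / M) * β n * (2 * M * K n + M + (M : ℝ) ^ 2 * (K n + 1) ^ 2) /
          ((Eu / M) * (K n + 1) * (∑ i ∈ Finset.univ.erase n, β i * Delta1 θ K M n i)
            + M * (K n + 1) ^ 2)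
        = 1 + Eu * β n * num M / den M := by
    filter_upwards [eventually_ge_atTop 1] with M hM
    have hm0 : (0:ℝ) < (M : ℝ) := by exact_mod_cast hM
    have hm0' : (M : ℝ) ≠ 0 := hm0.ne'
    rw [← hS, hsum M]
    congr 1
    have hdennum : (Eu / M) * (K n + 1) * (B M + (M : ℝ) * D) + (M : ℝ) * (K n + 1) ^ 2
        = (M : ℝ) * den M := by
      rw [hden, ← ha_def]
      field_simp
    have hnumnum : (Eu / M) * β n * (2 * M * K n + M + (M : ℝ) ^ 2 * (K n + 1) ^ 2)
        = (M : ℝ) * (Eu * β n * num M) := by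
      rw [hnum, ← ha_def]
      field_simp
    rw [hdennum, hnumnum, mul_div_mul_left _ _ hm0']
  -- conclude
  have hpos : (0:ℝ) < 1 + Eu * β n := by nlinarith [hEu, hβ n]
  have hinner : Tendsto (fun M : ℕ => 1 + Eu * β n * num M / den M) atTop
      (nhds (1 + Eu * β n)) := by
    simpa using (tendsto_const_nhds (x := (1:ℝ)) (f := atTop)).add hfrac
  have hlog : Tendsto (fun M : ℕ => Real.logb 2 (1 + Eu * β n * num M / den M)) atTop
      (nhds (Real.logb 2 (1 + Eu * β n))) := by
    have hc : ContinuousAt (Real.logb 2) (1 + Eu * β n) := by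
      unfold Real.logb
      exact (Real.continuousAt_log hpos.ne').div_const _
    exact hc.tendsto.comp hinner
  exact hlog.congr' (by filter_upwards [heq] with M hM; rw [hM])
end
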